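/- (Witness value for general states, Proposition 3) Let ρ be a 16×16 density matrix on ℂ⁴ ⊗ ℂ⁴ with correlation coefficients t_{kℓ} = Tr(ρ (A_k ⊗ B_ℓ)). Define E_{xyz} = Tr[(2A_x ⊗ 2B_y) ρ (2A_x ⊗ 2B_y)† · 4 A_z ⊗ B_z] and witness coefficients w_{xyz} = sgn(t_{zz}) Tr(A_x A_z A_x A_z) Tr(B_y B_z B_y B_z). Then Σ_{x,y,z=1}^{16} w_{xyz} E_{xyz} = 4³ Σ_{z=1}^{16} |t_{zz}|. -/

import Mathlib

open Matrix Kronecker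

/-- The Pauli matrices: `σp 0 = I`, `σp 1 = X`, `σp 2 = Y`, `σp 3 = Z`. -/
noncomputable def σp : Fin 4 → Matrix (Fin 2) (Fin 2) ℂ
  | 0 => 1
  | 1 => !![0, 1; 1, 0]
  | 2 => !![0, -Complex.I; Complex.I, 0]
  | 3 => !![1, 0; 0, -1]

/-- The normalized Pauli products `A_k = (1/2) σ_{k₀} ⊗ σ_{k₁}`, viewed as 4×4 matrices. -/
noncomputable def Ap (k : Fin 4 × Fin 4) : Matrix (Fin 2 × Fin 2) (Fin 2 × Fin 2) ℂ :=
  (1/2 : ℂ) • (σp k.1 ⊗ₖ σp k.2)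

/-!
Conjugating a Pauli product by another one only changes its sign: `A_x A_z A_x = ±A_z / 4`,
with the same sign `ε_{xz}` that gives `Tr(A_x A_z A_x A_z) = ε_{xz} / 4`. Hence, by cyclicity of
the trace, `E_{xyz} = 4 ε_{xz} ε_{P y, P z} t_{zz}`, and the witness coefficient carries the
matching factor `sgn(t_{zz}) ε_{xz} ε_{P y, P z} / 16`. Since `ε² = 1`, every summand equals
`sgn(t_{zz}) t_{zz} / 4 = |t_{zz}| / 4` (the trace `t_{zz}` is real because `ρ` is Hermitian),
and summing over the `16²` pairs `(x, y)` gives `4³ |t_{zz}|`.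
-/

theorem Real.sign_mul_self (r : ℝ) : Real.sign r * r = |r| := by
  obtain hr | rfl | hr := lt_trichotomy r 0
  · rw [Real.sign_of_neg hr, abs_of_neg hr, neg_one_mul]
  · simp
  · rw [Real.sign_of_pos hr, abs_of_pos hr, one_mul]

theorem Complex.ofReal_sign_re_mul_self {t : ℂ} (ht : IsSelfAdjoint t) :
    (Real.sign t.re : ℂ) * t = |t.re| := by
  obtain ⟨r, rfl⟩ := Complex.conj_eq_iff_real.mp ht.star_eq
  rw [Complex.ofReal_re, ← Complex.ofReal_mul, Real.sign_mul_self]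

namespace Matrix

variable {n R : Type*} [Fintype n]

theorem trace_mul_mul_mul_of_mul_mul_eq_smul [CommSemiring R] {U V ρ Z : Matrix n n R} {c : R}
    (h : V * Z * U = c • Z) : (U * ρ * V * Z).trace = c * (ρ * Z).trace := by
  calc (U * ρ * V * Z).trace = (ρ * (V * Z * U)).trace := by
        simp only [Matrix.mul_assoc]
        rw [trace_mul_comm U]
        simp only [Matrix.mul_assoc]
    _ = c * (ρ * Z).trace := by rw [h, Matrix.mul_smul, trace_smul, smul_eq_mul]

theorem IsHermitian.isSelfAdjoint_trace_mul [CommRing R] [StarRing R] {A B : Matrix n n R}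
    (hA : A.IsHermitian) (hB : B.IsHermitian) : IsSelfAdjoint (A * B).trace := by
  rw [IsSelfAdjoint, ← trace_conjTranspose, conjTranspose_mul, hA.eq, hB.eq, trace_mul_comm]

end Matrix

/-- Two Pauli matrices commute when one of them is the identity or they coincide, and
anticommute otherwise. -/
def pauliSign (a b : Fin 4) : ℂ := if a = 0 ∨ b = 0 ∨ a = b then 1 else -1

theorem pauliSign_mul_self (a b : Fin 4) : pauliSign a b * pauliSign a b = 1 := by
  unfold pauliSign; split_ifs <;> norm_num

theorem σp_conjTranspose (a : Fin 4) : (σp a)ᴴ = σp a := by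
  fin_cases a <;> ext i j <;> fin_cases i <;> fin_cases j <;> simp [σp]

theorem σp_mul_self (a : Fin 4) : σp a * σp a = 1 := by
  fin_cases a <;> simp [σp, one_fin_two]

theorem σp_mul_mul_self (a b : Fin 4) : σp a * σp b * σp a = pauliSign a b • σp b := by
  fin_cases a <;> fin_cases b <;> simp [σp, pauliSign, one_fin_two]

def apSign (x z : Fin 4 × Fin 4) : ℂ := pauliSign x.1 z.1 * pauliSign x.2 z.2

theorem apSign_mul_self (x z : Fin 4 × Fin 4) : apSign x z * apSign x z = 1 := by
  rw [apSign, mul_mul_mul_comm, pauliSign_mul_self, pauliSign_mul_self, one_mul]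

theorem Ap_conjTranspose (x : Fin 4 × Fin 4) : (Ap x)ᴴ = Ap x := by
  rw [Ap, conjTranspose_smul, conjTranspose_kronecker, σp_conjTranspose, σp_conjTranspose]
  norm_num

theorem Ap_mul_self (x : Fin 4 × Fin 4) : Ap x * Ap x = (1 / 4 : ℂ) • 1 := by
  rw [Ap, smul_mul_smul_comm, ← mul_kronecker_mul, σp_mul_self, σp_mul_self, one_kronecker_one]
  norm_num

theorem Ap_mul_mul_self (x z : Fin 4 × Fin 4) :
    Ap x * Ap z * Ap x = (apSign x z / 4) • Ap z := by
  simp only [Ap, smul_mul_smul_comm, ← mul_kronecker_mul, σp_mul_mul_self, smul_kronecker,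
    kronecker_smul, smul_smul, apSign]
  ring_nf

theorem trace_Ap_mul_Ap_mul_Ap_mul_Ap (x z : Fin 4 × Fin 4) :
    (Ap x * Ap z * Ap x * Ap z).trace = apSign x z / 4 := by
  rw [Ap_mul_mul_self, smul_mul, Ap_mul_self, smul_smul, trace_smul, trace_one]
  norm_num
  ring

theorem trace_two_Ap_kronecker_conj (x y z w : Fin 4 × Fin 4)
    (ρ : Matrix ((Fin 2 × Fin 2) × (Fin 2 × Fin 2)) ((Fin 2 × Fin 2) × (Fin 2 × Fin 2)) ℂ) :
    ((((2 : ℂ) • Ap x) ⊗ₖ ((2 : ℂ) • Ap y)) * ρ * (((2 : ℂ) • Ap x) ⊗ₖ ((2 : ℂ) • Ap y))ᴴ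
      * (Ap z ⊗ₖ Ap w)).trace = apSign x z * apSign y w * (ρ * (Ap z ⊗ₖ Ap w)).trace := by
  refine trace_mul_mul_mul_of_mul_mul_eq_smul ?_
  rw [conjTranspose_kronecker, conjTranspose_smul, conjTranspose_smul, Ap_conjTranspose,
    Ap_conjTranspose, ← mul_kronecker_mul, ← mul_kronecker_mul]
  simp only [smul_mul_smul_comm, smul_mul, Ap_mul_mul_self, smul_smul, smul_kronecker,
    kronecker_smul, star_ofNat]
  congr 1
  ring

theorem witness_summand_eq
    {ρ : Matrix ((Fin 2 × Fin 2) × (Fin 2 × Fin 2)) ((Fin 2 × Fin 2) × (Fin 2 × Fin 2)) ℂ}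
    (hρ : ρ.IsHermitian) (x y z w : Fin 4 × Fin 4) :
    (((Real.sign ((ρ * (Ap z ⊗ₖ Ap w)).trace.re) : ℝ) : ℂ)
          * (Ap x * Ap z * Ap x * Ap z).trace * (Ap y * Ap w * Ap y * Ap w).trace)
        * (((((2:ℂ) • Ap x) ⊗ₖ ((2:ℂ) • Ap y)) * ρ * ((((2:ℂ) • Ap x) ⊗ₖ ((2:ℂ) • Ap y)))ᴴ
              * ((4:ℂ) • (Ap z ⊗ₖ Ap w))).trace)
      = |(ρ * (Ap z ⊗ₖ Ap w)).trace.re| / 4 := by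
  have ht : IsSelfAdjoint (ρ * (Ap z ⊗ₖ Ap w)).trace :=
    hρ.isSelfAdjoint_trace_mul <| by
      rw [IsHermitian, conjTranspose_kronecker, Ap_conjTranspose, Ap_conjTranspose]
  rw [← Complex.ofReal_sign_re_mul_self ht, Matrix.mul_smul, trace_smul,
    trace_two_Ap_kronecker_conj, trace_Ap_mul_Ap_mul_Ap_mul_Ap, trace_Ap_mul_Ap_mul_Ap_mul_Ap,
    smul_eq_mul]
  generalize (ρ * (Ap z ⊗ₖ Ap w)).trace = t
  linear_combination (Real.sign t.re * t / 4 : ℂ) *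
    (apSign y w * apSign y w * apSign_mul_self x z + apSign_mul_self y w)

open ComplexOrder in
theorem witness_value_general_general (P : Equiv.Perm (Fin 4 × Fin 4))
    (ρ : Matrix ((Fin 2 × Fin 2) × (Fin 2 × Fin 2)) ((Fin 2 × Fin 2) × (Fin 2 × Fin 2)) ℂ)
    (hρ : ρ.PosSemidef) :
    ∑ x : Fin 4 × Fin 4, ∑ y : Fin 4 × Fin 4, ∑ z : Fin 4 × Fin 4,
      (((Real.sign ((ρ * (Ap z ⊗ₖ Ap (P z))).trace.re) : ℝ) : ℂ)
          * (Ap x * Ap z * Ap x * Ap z).trace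
          * (Ap (P y) * Ap (P z) * Ap (P y) * Ap (P z)).trace)
        * (((((2:ℂ) • Ap x) ⊗ₖ ((2:ℂ) • Ap (P y))) * ρ
              * ((((2:ℂ) • Ap x) ⊗ₖ ((2:ℂ) • Ap (P y))))ᴴ
              * ((4:ℂ) • (Ap z ⊗ₖ Ap (P z)))).trace)
    = ((4^3 * ∑ z : Fin 4 × Fin 4, |(ρ * (Ap z ⊗ₖ Ap (P z))).trace.re| : ℝ) : ℂ) := by
  simp only [witness_summand_eq hρ.isHermitian, Finset.sum_const, Finset.card_univ,
    Fintype.card_prod, Fintype.card_fin, nsmul_eq_mul, ← Finset.sum_div]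
  push_cast
  ring

open ComplexOrder in
/-- Witness value for general states (Proposition 3): for a two-ququart density matrix
`ρ` with correlation coefficients `t_{zz} = Tr(ρ (A_z ⊗ B_z))` (with `B_j = A_{P(j)}`),
correlators `E_{xyz} = Tr[(2A_x ⊗ 2B_y) ρ (2A_x ⊗ 2B_y)† (4 A_z ⊗ B_z)]` and witness
coefficients `w_{xyz} = sgn(t_{zz}) Tr(A_x A_z A_x A_z) Tr(B_y B_z B_y B_z)`, one has
`Σ_{x,y,z} w_{xyz} E_{xyz} = 4³ Σ_z |t_{zz}|`. -/
theorem witness_value_general (P : Equiv.Perm (Fin 4 × Fin 4))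
    (ρ : Matrix ((Fin 2 × Fin 2) × (Fin 2 × Fin 2)) ((Fin 2 × Fin 2) × (Fin 2 × Fin 2)) ℂ)
    (hρ : ρ.PosSemidef) (hρt : ρ.trace = 1) :
    ∑ x : Fin 4 × Fin 4, ∑ y : Fin 4 × Fin 4, ∑ z : Fin 4 × Fin 4,
      (((Real.sign ((ρ * (Ap z ⊗ₖ Ap (P z))).trace.re) : ℝ) : ℂ)
          * (Ap x * Ap z * Ap x * Ap z).trace
          * (Ap (P y) * Ap (P z) * Ap (P y) * Ap (P z)).trace)
        * (((((2:ℂ) • Ap x) ⊗ₖ ((2:ℂ) • Ap (P y))) * ρ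
              * ((((2:ℂ) • Ap x) ⊗ₖ ((2:ℂ) • Ap (P y))))ᴴ
              * ((4:ℂ) • (Ap z ⊗ₖ Ap (P z)))).trace)
    = ((4^3 * ∑ z : Fin 4 × Fin 4, |(ρ * (Ap z ⊗ₖ Ap (P z))).trace.re| : ℝ) : ℂ) :=
  witness_value_general_general P ρ hρ
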